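/- With the notation of the unbalanced Wasserstein formula, the matrix γ defined by γ_{σ_U(i), σ_V(j)} := Σ_{k=1}^{n+m} 1{⌈n h_k⌉ = i} 1{⌈m h_k⌉ = j} (h_k - h_{k-1}) has row sums equal to 1/n and column sums equal to 1/m, i.e., it defines a coupling between μ_U and μ_V. -/

import Mathlib

private lemma telescope_aux (f : ℕ → ℝ) (a : ℕ) : ∀ b, a ≤ b →
    ∑ k ∈ Finset.Ioc a b, (f k - f (k - 1)) = f b - f a := by
  intro b hb
  induction b, hb using Nat.le_induction with
  | base => simp
  | succ b hb ih =>
    rw [Finset.sum_Ioc_succ_top hb, ih]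
    have hb1 : b + 1 - 1 = b := rfl
    rw [hb1]; ring

private lemma exists_cut_aux (N : ℕ) (h : ℕ → ℝ) (hmono : MonotoneOn h (Set.Icc 0 N))
    (c : ℝ) (h0 : h 0 ≤ c) :
    ∃ a ≤ N, ∀ k ≤ N, (h k ≤ c ↔ k ≤ a) := by
  classical
  set s : Finset ℕ := (Finset.range (N + 1)).filter (fun k => h k ≤ c) with hs
  have hne : s.Nonempty :=
    ⟨0, Finset.mem_filter.mpr ⟨Finset.mem_range.mpr (Nat.succ_pos N), h0⟩⟩
  have hmem' : s.max' hne ∈ s := s.max'_mem hne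
  have h1 : s.max' hne < N + 1 := Finset.mem_range.mp (Finset.mem_filter.mp hmem').1
  have h2 : h (s.max' hne) ≤ c := (Finset.mem_filter.mp hmem').2
  refine ⟨s.max' hne, by omega, fun k hk => ⟨fun hkc => ?_, fun hka => ?_⟩⟩
  · exact s.le_max' k (Finset.mem_filter.mpr ⟨Finset.mem_range.mpr (by omega), hkc⟩)
  · exact le_trans (hmono (Set.mem_Icc.mpr ⟨Nat.zero_le _, hk⟩)
      (Set.mem_Icc.mpr ⟨Nat.zero_le _, by omega⟩) hka) h2

private lemma key_aux (n N : ℕ) (hn : 0 < n) (h : ℕ → ℝ) (h0 : h 0 = 0)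
    (hmono : MonotoneOn h (Set.Icc 0 N))
    (hsurj : ∀ k ≤ n, ∃ i ≤ N, h i = (k : ℝ) / n)
    (i : ℕ) (hi1 : 1 ≤ i) (hin : i ≤ n) :
    ∑ k ∈ Finset.Icc 1 N,
      (if ⌈(n : ℝ) * h k⌉₊ = i then (1 : ℝ) else 0) * (h k - h (k - 1)) = 1 / n := by
  classical
  have hn' : (0 : ℝ) < n := by exact_mod_cast hn
  have hi1' : (1 : ℝ) ≤ (i : ℝ) := by exact_mod_cast hi1
  set c₀ : ℝ := ((i : ℝ) - 1) / n with hc₀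
  set c₁ : ℝ := (i : ℝ) / n with hc₁
  have hc₀0 : (0 : ℝ) ≤ c₀ := div_nonneg (by linarith) hn'.le
  have hc₁0 : (0 : ℝ) ≤ c₁ := div_nonneg (by linarith) hn'.le
  obtain ⟨a, haN, ha⟩ := exists_cut_aux N h hmono c₀ (by rw [h0]; exact hc₀0)
  obtain ⟨b, hbN, hb⟩ := exists_cut_aux N h hmono c₁ (by rw [h0]; exact hc₁0)
  have hcast : ((i - 1 : ℕ) : ℝ) = (i : ℝ) - 1 := by
    push_cast [Nat.cast_sub hi1]; ring
  have hha : h a = c₀ := by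
    obtain ⟨i₀, hi₀N, hi₀⟩ := hsurj (i - 1) (by omega)
    have hi₀' : h i₀ = c₀ := by rw [hi₀, hcast]
    have h1 : i₀ ≤ a := (ha i₀ hi₀N).mp (le_of_eq hi₀')
    have h2 : h a ≤ c₀ := (ha a haN).mpr le_rfl
    have h3 : c₀ ≤ h a := by
      rw [← hi₀']
      exact hmono (Set.mem_Icc.mpr ⟨Nat.zero_le _, hi₀N⟩)
        (Set.mem_Icc.mpr ⟨Nat.zero_le _, haN⟩) h1
    linarith
  have hhb : h b = c₁ := by
    obtain ⟨i₀, hi₀N, hi₀⟩ := hsurj i hin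
    have hi₀' : h i₀ = c₁ := hi₀.trans hc₁.symm
    have h1 : i₀ ≤ b := (hb i₀ hi₀N).mp (le_of_eq hi₀')
    have h2 : h b ≤ c₁ := (hb b hbN).mpr le_rfl
    have h3 : c₁ ≤ h b := by
      rw [← hi₀']
      exact hmono (Set.mem_Icc.mpr ⟨Nat.zero_le _, hi₀N⟩)
        (Set.mem_Icc.mpr ⟨Nat.zero_le _, hbN⟩) h1
    linarith
  have hc01 : c₀ ≤ c₁ := by
    rw [hc₀, hc₁]
    exact (div_le_div_iff_of_pos_right hn').mpr (by linarith)
  have hab : a ≤ b := (hb a haN).mp (by rw [hha]; exact hc01)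
  have hcond : ∀ k ∈ Finset.Icc 1 N, (⌈(n : ℝ) * h k⌉₊ = i) ↔ (a < k ∧ k ≤ b) := by
    intro k hk
    rw [Finset.mem_Icc] at hk
    rw [Nat.ceil_eq_iff (by omega), hcast]
    constructor
    · rintro ⟨h1, h2⟩
      have hk1 : c₀ < h k := by rw [hc₀, div_lt_iff₀ hn', mul_comm]; linarith
      have hk2 : h k ≤ c₁ := by rw [hc₁, le_div_iff₀ hn', mul_comm]; linarith
      refine ⟨?_, (hb k hk.2).mp hk2⟩
      by_contra hcon
      push_neg at hcon
      exact absurd ((ha k hk.2).mpr hcon) (not_le.mpr hk1)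
    · rintro ⟨h1, h2⟩
      have hk1 : c₀ < h k := lt_of_not_ge fun hc => absurd ((ha k hk.2).mp hc) (by omega)
      have hk2 : h k ≤ c₁ := (hb k hk.2).mpr h2
      constructor
      · rw [hc₀, div_lt_iff₀ hn', mul_comm] at hk1; linarith
      · rw [hc₁, le_div_iff₀ hn', mul_comm] at hk2; linarith
  calc ∑ k ∈ Finset.Icc 1 N,
      (if ⌈(n : ℝ) * h k⌉₊ = i then (1 : ℝ) else 0) * (h k - h (k - 1))
      = ∑ k ∈ Finset.Icc 1 N,
        (if a < k ∧ k ≤ b then (h k - h (k - 1)) else 0) := by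
        refine Finset.sum_congr rfl fun k hk => ?_
        by_cases hc : ⌈(n : ℝ) * h k⌉₊ = i
        · rw [if_pos hc, if_pos ((hcond k hk).mp hc), one_mul]
        · rw [if_neg hc, if_neg (fun hab' => hc ((hcond k hk).mpr hab')), zero_mul]
    _ = ∑ k ∈ Finset.Ioc a b, (h k - h (k - 1)) := by
        rw [Finset.sum_ite, Finset.sum_const_zero, add_zero]
        congr 1
        ext k
        simp only [Finset.mem_filter, Finset.mem_Icc, Finset.mem_Ioc]
        omega
    _ = h b - h a := telescope_aux h a b hab
    _ = 1 / n := by rw [hha, hhb, hc₀, hc₁]; field_simp; ring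

/-- The matrix `γ` defined (through the ordering permutations `σU`, `σV`) by
`γ (σU i) (σV j) = ∑ₖ 1{⌈n hₖ⌉ = i} 1{⌈m hₖ⌉ = j} (hₖ - hₖ₋₁)` has row sums
`1/n` and column sums `1/m`, i.e. it is a coupling of the uniform empirical
measures `μ_U` and `μ_V`. -/
theorem unbalanced_coupling_marginals (n m : ℕ) (hn : 0 < n) (hm : 0 < m)
    (h : ℕ → ℝ) (h0 : h 0 = 0) (hlast : h (n + m) = 1)
    (hmono : MonotoneOn h (Set.Icc 0 (n + m)))
    (hmem : ∀ i ≤ n + m, (∃ k ≤ n, h i = (k : ℝ) / n) ∨ (∃ l ≤ m, h i = (l : ℝ) / m))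
    (hsurj₁ : ∀ k ≤ n, ∃ i ≤ n + m, h i = (k : ℝ) / n)
    (hsurj₂ : ∀ l ≤ m, ∃ i ≤ n + m, h i = (l : ℝ) / m)
    (σU σV : Equiv.Perm ℕ)
    (hσU : Set.BijOn σU (Set.Icc 1 n) (Set.Icc 1 n))
    (hσV : Set.BijOn σV (Set.Icc 1 m) (Set.Icc 1 m))
    (γ : ℕ → ℕ → ℝ)
    (hγ : ∀ i j, γ (σU i) (σV j) =
      ∑ k ∈ Finset.Icc 1 (n + m),
        (if ⌈(n : ℝ) * h k⌉₊ = i then (1 : ℝ) else 0)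
          * (if ⌈(m : ℝ) * h k⌉₊ = j then (1 : ℝ) else 0)
          * (h k - h (k - 1))) :
    (∀ a ∈ Finset.Icc 1 n, ∑ b ∈ Finset.Icc 1 m, γ a b = 1 / n) ∧
    (∀ b ∈ Finset.Icc 1 m, ∑ a ∈ Finset.Icc 1 n, γ a b = 1 / m) := by
  classical
  have hn' : (0 : ℝ) < n := by exact_mod_cast hn
  have hm' : (0 : ℝ) < m := by exact_mod_cast hm
  have hle1 : ∀ k ≤ n + m, h k ≤ 1 := fun k hk =>
    hlast ▸ hmono (Set.mem_Icc.mpr ⟨Nat.zero_le _, hk⟩)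
      (Set.mem_Icc.mpr ⟨Nat.zero_le _, le_refl _⟩) hk
  have hmemU : ∀ i, i ∈ Finset.Icc 1 n ↔ σU i ∈ Finset.Icc 1 n := by
    intro i
    simp only [Finset.mem_Icc, ← Set.mem_Icc (a := 1) (b := n)]
    exact ⟨fun hi => hσU.mapsTo hi, fun hi => by
      obtain ⟨j, hj, e⟩ := hσU.surjOn hi
      rwa [← σU.injective e]⟩
  have hmemV : ∀ j, j ∈ Finset.Icc 1 m ↔ σV j ∈ Finset.Icc 1 m := by
    intro j
    simp only [Finset.mem_Icc, ← Set.mem_Icc (a := 1) (b := m)]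
    exact ⟨fun hj => hσV.mapsTo hj, fun hj => by
      obtain ⟨j', hj', e⟩ := hσV.surjOn hj
      rwa [← σV.injective e]⟩
  constructor
  · intro a ha
    obtain ⟨i, hi, rfl⟩ := hσU.surjOn (Set.mem_Icc.mpr (Finset.mem_Icc.mp ha))
    rw [Set.mem_Icc] at hi
    have hre : ∑ b ∈ Finset.Icc 1 m, γ (σU i) b = ∑ j ∈ Finset.Icc 1 m, γ (σU i) (σV j) :=
      (Finset.sum_equiv σV (fun j => hmemV j) (fun j _ => rfl)).symm
    rw [hre]
    have hcore : ∀ j ∈ Finset.Icc 1 m, γ (σU i) (σV j) =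
        ∑ k ∈ Finset.Icc 1 (n + m),
          (if ⌈(n : ℝ) * h k⌉₊ = i then (1 : ℝ) else 0)
            * (if ⌈(m : ℝ) * h k⌉₊ = j then (1 : ℝ) else 0)
            * (h k - h (k - 1)) := fun j _ => hγ i j
    rw [Finset.sum_congr rfl hcore, Finset.sum_comm]
    have hinner : ∀ k ∈ Finset.Icc 1 (n + m),
        ∑ j ∈ Finset.Icc 1 m,
          (if ⌈(n : ℝ) * h k⌉₊ = i then (1 : ℝ) else 0)
            * (if ⌈(m : ℝ) * h k⌉₊ = j then (1 : ℝ) else 0)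
            * (h k - h (k - 1))
        = (if ⌈(n : ℝ) * h k⌉₊ = i then (1 : ℝ) else 0) * (h k - h (k - 1)) := by
      intro k hk
      rw [Finset.mem_Icc] at hk
      by_cases hc : ⌈(n : ℝ) * h k⌉₊ = i
      · simp only [hc, eq_self_iff_true, if_true, one_mul]
        rw [← Finset.sum_mul, Finset.sum_ite_eq]
        have hpos : 0 < h k := by
          have h1 : 0 < ⌈(n : ℝ) * h k⌉₊ := by omega
          rw [Nat.ceil_pos] at h1
          by_contra hcon
          push_neg at hcon
          nlinarith
        have hmem1 : 1 ≤ ⌈(m : ℝ) * h k⌉₊ := Nat.ceil_pos.mpr (by positivity)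
        have hmem2 : ⌈(m : ℝ) * h k⌉₊ ≤ m := Nat.ceil_le.mpr (by nlinarith [hle1 k hk.2])
        rw [if_pos (Finset.mem_Icc.mpr ⟨hmem1, hmem2⟩), one_mul]
      · simp [hc]
    rw [Finset.sum_congr rfl hinner]
    exact key_aux n (n + m) hn h h0 hmono hsurj₁ i hi.1 hi.2
  · intro b hb
    obtain ⟨j, hj, rfl⟩ := hσV.surjOn (Set.mem_Icc.mpr (Finset.mem_Icc.mp hb))
    rw [Set.mem_Icc] at hj
    have hre : ∑ a ∈ Finset.Icc 1 n, γ a (σV j) = ∑ i ∈ Finset.Icc 1 n, γ (σU i) (σV j) :=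
      (Finset.sum_equiv σU (fun i => hmemU i) (fun i _ => rfl)).symm
    rw [hre]
    have hcore : ∀ i ∈ Finset.Icc 1 n, γ (σU i) (σV j) =
        ∑ k ∈ Finset.Icc 1 (n + m),
          (if ⌈(n : ℝ) * h k⌉₊ = i then (1 : ℝ) else 0)
            * (if ⌈(m : ℝ) * h k⌉₊ = j then (1 : ℝ) else 0)
            * (h k - h (k - 1)) := fun i _ => hγ i j
    rw [Finset.sum_congr rfl hcore, Finset.sum_comm]
    have hinner : ∀ k ∈ Finset.Icc 1 (n + m),
        ∑ i ∈ Finset.Icc 1 n,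
          (if ⌈(n : ℝ) * h k⌉₊ = i then (1 : ℝ) else 0)
            * (if ⌈(m : ℝ) * h k⌉₊ = j then (1 : ℝ) else 0)
            * (h k - h (k - 1))
        = (if ⌈(m : ℝ) * h k⌉₊ = j then (1 : ℝ) else 0) * (h k - h (k - 1)) := by
      intro k hk
      rw [Finset.mem_Icc] at hk
      by_cases hc : ⌈(m : ℝ) * h k⌉₊ = j
      · simp only [hc, eq_self_iff_true, if_true, mul_one, one_mul]
        rw [← Finset.sum_mul, Finset.sum_ite_eq]
        have hpos : 0 < h k := by
          have h1 : 0 < ⌈(m : ℝ) * h k⌉₊ := by omega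
          rw [Nat.ceil_pos] at h1
          by_contra hcon
          push_neg at hcon
          nlinarith
        have hmem1 : 1 ≤ ⌈(n : ℝ) * h k⌉₊ := Nat.ceil_pos.mpr (by positivity)
        have hmem2 : ⌈(n : ℝ) * h k⌉₊ ≤ n := Nat.ceil_le.mpr (by nlinarith [hle1 k hk.2])
        rw [if_pos (Finset.mem_Icc.mpr ⟨hmem1, hmem2⟩), one_mul]
      · simp [hc]
    rw [Finset.sum_congr rfl hinner]
    exact key_aux m (n + m) hm h h0 hmono hsurj₂ j hj.1 hj.2
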